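/- arXiv:1909.04172 — 3 statements merged into one kernel-verified Lean document; each statement's English description precedes it below -/
import Mathlib

section
/- Let i be a node with a set P of at least (2β+1)f+1 regular in-neighbors of which at most βf are impersonated, and at most f adversarial in-neighbors. Then one can pick one common regular non-impersonated in-neighbor q and at least (β+1)f pairwise distinct regular non-impersonated in-neighbors p_1,…,p_r (all distinct from q), with r at least the number of adversarial-or-impersonated in-neighbors; hence there exist at least (β+1)f motifs around i, each containing an independent node. -/
open Finset

lemma Finset.exists_mem_le_card_sdiff_singleton {α : Type*} [DecidableEq α] {s : Finset α}
    {m : ℕ} (hs : m + 1 ≤ s.card) : ∃ q ∈ s, m ≤ (s \ {q}).card := by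
  obtain ⟨q, hq⟩ : s.Nonempty := card_pos.mp (by omega)
  refine ⟨q, hq, ?_⟩
  rw [sdiff_singleton_eq_erase, card_erase_of_mem hq]
  omega

theorem motif_existence_general (V : Type) [DecidableEq V]
    (R Imp Adv : Finset V) (f β : ℕ)
    (hR : (2 * β + 1) * f + 1 ≤ R.card)
    (hImpSub : Imp ⊆ R) (hImp : Imp.card ≤ β * f)
    (hAdv : Adv.card ≤ f) :
    ∃ q ∈ R \ Imp, ∃ P : Finset V,
      P ⊆ (R \ Imp) \ {q} ∧ (β + 1) * f ≤ P.card ∧ (Adv ∪ Imp).card ≤ P.card := by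
  have hsplit : (2 * β + 1) * f = β * f + (β + 1) * f := by ring
  have hgood : (β + 1) * f + 1 ≤ (R \ Imp).card := by
    rw [card_sdiff_of_subset hImpSub]
    omega
  have hbad : (Adv ∪ Imp).card ≤ (β + 1) * f :=
    (card_union_le Adv Imp).trans (by rw [add_one_mul]; omega)
  obtain ⟨q, hq, hP⟩ := exists_mem_le_card_sdiff_singleton hgood
  exact ⟨q, hq, _, subset_rfl, hP, hbad.trans hP⟩

/-- given at least (2β+1)f+1 regular in-neighbors of which at most
βf are impersonated and at most f adversarial in-neighbors, one can pick a
common good node q and at least (β+1)f further distinct good nodes, at least as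
many as the adversarial-or-impersonated in-neighbors; hence at least (β+1)f
motifs, each with an independent node. -/
theorem motif_existence (V : Type) [DecidableEq V]
    (R Imp Adv : Finset V) (f β : ℕ)
    (hR : (2 * β + 1) * f + 1 ≤ R.card)
    (hImpSub : Imp ⊆ R) (hImp : Imp.card ≤ β * f)
    (hAdv : Adv.card ≤ f) (hdisj : Disjoint R Adv) :
    ∃ q ∈ R \ Imp, ∃ P : Finset V,
      P ⊆ (R \ Imp) \ {q} ∧ (β + 1) * f ≤ P.card ∧ (Adv ∪ Imp).card ≤ P.card :=
  motif_existence_general V R Imp Adv f β hR hImpSub hImp hAdv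
end

section
/- Termination of the SR-MEDAG construction under adversaries: let G be strongly (3(β+1)f+1)-robust w.r.t. S_j, let A be an f-local adversarial set, and for each regular node i let at most βf of its regular in-neighbors be silenced (never counted as having sent the correct message). If the set C of regular nodes that never flip their counter to 1 were nonempty, then C contains a node i with at least 3(β+1)f+1 in-neighbors outside C, of which at least 2(β+1)f+1 are regular, non-silenced nodes with counter 1 — contradicting i ∈ C. Hence C is empty: every regular node eventually flips its counter. -/
/-!
The regular nodes that never flip form a set `C` avoiding the sources. If `C` were nonempty,
robustness would give `i ∈ C` with `3(β+1)f+1` in-neighbors outside `C`; at most `f` of them are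
adversarial and at most `βf` silenced, and every other one is a regular node that flipped. That
leaves `2(β+1)f+1` flipped, counted in-neighbors, so `i` flips after all.
-/

open Finset

namespace SRMEDAG

variable {V : Type*} [Fintype V] [DecidableEq V]
  (A : Finset V) (flips : V → Prop) [DecidablePred flips]

def stuck : Finset V := univ.filter fun i => i ∉ A ∧ ¬ flips i

variable {A flips}

lemma mem_stuck {i : V} : i ∈ stuck A flips ↔ i ∉ A ∧ ¬ flips i := by
  simp [stuck]

lemma stuck_subset_univ_sdiff {S : Finset V} (hsrc : ∀ i ∈ S, i ∉ A → flips i) :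
    stuck A flips ⊆ univ \ S := fun i hi => by
  obtain ⟨hiA, hi⟩ := mem_stuck.1 hi
  exact mem_sdiff.2 ⟨mem_univ i, fun hiS => hi (hsrc i hiS hiA)⟩

lemma sdiff_stuck_subset (M Imp : Finset V) :
    M \ stuck A flips ⊆ (M \ (A ∪ Imp)).filter flips ∪ (M ∩ A ∪ M ∩ Imp) := by
  intro j hj
  obtain ⟨hjM, hjC⟩ := mem_sdiff.1 hj
  rw [mem_stuck, not_and_not_right] at hjC
  by_cases hjA : j ∈ A
  · simp [hjM, hjA]
  by_cases hjI : j ∈ Imp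
  · simp [hjM, hjI]
  simp [hjM, hjA, hjI, hjC hjA]

lemma card_sdiff_stuck_le (M Imp : Finset V) :
    #(M \ stuck A flips) ≤ #((M \ (A ∪ Imp)).filter flips) + #(M ∩ A) + #(M ∩ Imp) :=
  calc #(M \ stuck A flips)
      ≤ #((M \ (A ∪ Imp)).filter flips ∪ (M ∩ A ∪ M ∩ Imp)) :=
        card_le_card (sdiff_stuck_subset M Imp)
    _ ≤ #((M \ (A ∪ Imp)).filter flips) + (#(M ∩ A) + #(M ∩ Imp)) :=
        (card_union_le _ _).trans (Nat.add_le_add_left (card_union_le _ _) _)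
    _ = _ := (add_assoc _ _ _).symm

end SRMEDAG

open SRMEDAG in
/-- termination of the SR-MEDAG construction under adversaries:
if `G` is strongly `(3(β+1)f+1)`-robust w.r.t. `S`, `A` is `f`-local, each
regular node has at most `βf` silenced regular in-neighbors, regular source
nodes flip their counter, and a regular node flips whenever at least
`2(β+1)f+1` of its regular non-silenced in-neighbors have flipped, then every
regular node flips its counter. -/
theorem srmedag_termination (V : Type) [Fintype V] [DecidableEq V]
    (N : V → Finset V) (S A Imp : Finset V) (f β : ℕ)
    (flips : V → Prop) [DecidablePred flips]
    (hrob : ∀ C : Finset V, C ⊆ Finset.univ \ S → C.Nonempty →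
      ∃ i ∈ C, 3 * (β + 1) * f + 1 ≤ (N i \ C).card)
    (hlocal : ∀ i : V, i ∉ A → (N i ∩ A).card ≤ f)
    (hImp : ∀ i : V, i ∉ A → (N i ∩ Imp).card ≤ β * f)
    (hsrc : ∀ i ∈ S, i ∉ A → flips i)
    (hflip : ∀ i : V, i ∉ A →
      2 * (β + 1) * f + 1 ≤ (((N i \ (A ∪ Imp))).filter flips).card → flips i) :
    ∀ i : V, i ∉ A → flips i := by
  by_contra! ⟨i₀, hi₀A, hi₀⟩
  obtain ⟨i, hiC, hcard⟩ :=
    hrob (stuck A flips) (stuck_subset_univ_sdiff hsrc) ⟨i₀, mem_stuck.2 ⟨hi₀A, hi₀⟩⟩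
  obtain ⟨hiA, hi⟩ := mem_stuck.1 hiC
  refine hi (hflip i hiA ?_)
  have hsplit := hcard.trans (card_sdiff_stuck_le (N i) Imp)
  have hA := hlocal i hiA
  have hI := hImp i hiA
  nlinarith
end

section
/- Sandwich filtering soundness: let a node receive values v_1 ≤ v_2 ≤ … ≤ v_n (sorted) from n ≥ 2m+1 neighbors, of which at most m are adversarial. After removing the m largest and m smallest values, every remaining value v lies between the minimum and maximum of the regular (non-adversarial) neighbors' values: min over regular values ≤ v ≤ max over regular values. -/
open Finset

namespace Fin

theorem exists_le_notMem_of_card_le {n m : ℕ} {s : Finset (Fin n)} (hs : #s ≤ m)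
    {i : Fin n} (hi : m ≤ (i : ℕ)) : ∃ j ≤ i, j ∉ s := by
  obtain ⟨j, hj, hjs⟩ := exists_mem_notMem_of_card_lt_card (s := s) (t := Iic i)
    (by rw [card_Iic]; omega)
  exact ⟨j, mem_Iic.mp hj, hjs⟩

theorem exists_ge_notMem_of_card_le {n m : ℕ} {s : Finset (Fin n)} (hs : #s ≤ m)
    {i : Fin n} (hi : (i : ℕ) + m < n) : ∃ j, i ≤ j ∧ j ∉ s := by
  obtain ⟨j, hj, hjs⟩ := exists_mem_notMem_of_card_lt_card (s := s) (t := Ici i)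
    (by rw [card_Ici]; omega)
  exact ⟨j, mem_Ici.mp hj, hjs⟩

end Fin

theorem sandwich_filtering_sound_general (n m : ℕ)
    (v : Fin n → ℝ) (hsorted : Monotone v)
    (Adv : Finset (Fin n)) (hAdv : Adv.card ≤ m)
    (hR : (Finset.univ \ Adv).Nonempty) :
    ∀ i : Fin n, m ≤ (i : ℕ) → (i : ℕ) + m < n →
      (Finset.univ \ Adv).inf' hR v ≤ v i ∧ v i ≤ (Finset.univ \ Adv).sup' hR v := by
  intro i hlow hhigh
  obtain ⟨j, hji, hj⟩ := Fin.exists_le_notMem_of_card_le hAdv hlow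
  obtain ⟨k, hik, hk⟩ := Fin.exists_ge_notMem_of_card_le hAdv hhigh
  exact ⟨(inf'_le v (by simpa using hj)).trans (hsorted hji),
    (hsorted hik).trans (le_sup' v (by simpa using hk))⟩

/-- sandwich filtering soundness: given `n ≥ 2m+1` sorted values
of which at most `m` are adversarial, after removing the `m` smallest and `m`
largest, every surviving value lies between the minimum and maximum of the
regular neighbors' values. -/
theorem sandwich_filtering_sound (n m : ℕ) (hn : 2 * m + 1 ≤ n)
    (v : Fin n → ℝ) (hsorted : Monotone v)
    (Adv : Finset (Fin n)) (hAdv : Adv.card ≤ m)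
    (hR : (Finset.univ \ Adv).Nonempty) :
    ∀ i : Fin n, m ≤ (i : ℕ) → (i : ℕ) + m < n →
      (Finset.univ \ Adv).inf' hR v ≤ v i ∧ v i ≤ (Finset.univ \ Adv).sup' hR v :=
  sandwich_filtering_sound_general n m v hsorted Adv hAdv hR
end
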